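/- Let A be symmetric positive definite and N symmetric with λ_min(N) > -λ_min(A), and β = (λ_min(N)+λ_max(N))/2. Then the spectral radius of I - (A + βI)⁻¹(A + N) is strictly less than 1. -/

import Mathlib

/-!
With `B = A + β I`, the iteration matrix is `B⁻¹ (β I - N)`, so an eigenpair `(μ, v)` satisfies
`(β I - N) v = μ B v`. Pairing with `v` gives `v* (β I - N) v = μ v* B v`. Since the spectrum of
`N` lies in `[β - r, β + r]` with `r = (λ_max(N) - λ_min(N)) / 2`, the left side has modulus at
most `r ‖v‖²`, while `v* B v ≥ (λ_min(A) + β) ‖v‖²`, and `r < λ_min(A) + β` is exactly the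
hypothesis `λ_min(A) + λ_min(N) > 0`.
-/

open Matrix

noncomputable def lamMin {n : ℕ} [NeZero n] {A : Matrix (Fin n) (Fin n) ℝ}
    (hA : A.IsHermitian) : ℝ :=
  Finset.univ.inf' Finset.univ_nonempty hA.eigenvalues

noncomputable def lamMax {n : ℕ} [NeZero n] {A : Matrix (Fin n) (Fin n) ℝ}
    (hA : A.IsHermitian) : ℝ :=
  Finset.univ.sup' Finset.univ_nonempty hA.eigenvalues

open scoped MatrixOrder ComplexOrder

namespace Matrix

variable {m 𝕜 : Type*} [Fintype m] [DecidableEq m] [RCLike 𝕜]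

theorem IsHermitian.posSemidef_sub_smul_one_iff {X : Matrix m m 𝕜} (hX : X.IsHermitian) (c : ℝ) :
    (X - c • 1).PosSemidef ↔ ∀ i, c ≤ hX.eigenvalues i := by
  rw [← le_iff, ← Algebra.algebraMap_eq_smul_one, algebraMap_le_iff_le_spectrum hX.isSelfAdjoint,
    hX.spectrum_real_eq_range_eigenvalues, Set.forall_mem_range]

theorem IsHermitian.posSemidef_smul_one_sub_iff {X : Matrix m m 𝕜} (hX : X.IsHermitian) (c : ℝ) :
    (c • 1 - X).PosSemidef ↔ ∀ i, hX.eigenvalues i ≤ c := by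
  rw [← le_iff, ← Algebra.algebraMap_eq_smul_one, le_algebraMap_iff_spectrum_le hX.isSelfAdjoint,
    hX.spectrum_real_eq_range_eigenvalues, Set.forall_mem_range]

omit [Fintype m] in
theorem PosSemidef.posDef_of_sub_smul_one {X : Matrix m m 𝕜} {c : ℝ} (hX : (X - c • 1).PosSemidef)
    (hc : 0 < c) : X.PosDef := by
  simpa using PosDef.posSemidef_add hX (PosDef.one.smul hc)

theorem re_star_dotProduct_add_smul_one_mulVec (X : Matrix m m 𝕜) (a : ℝ) (v : m → 𝕜) :
    RCLike.re (star v ⬝ᵥ (X + a • 1) *ᵥ v) =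
      RCLike.re (star v ⬝ᵥ X *ᵥ v) + a * RCLike.re (star v ⬝ᵥ v) := by
  simp [add_mulVec, dotProduct_add, smul_mulVec, dotProduct_smul, RCLike.smul_re]

theorem norm_lt_one_of_mulVec_eq_smul_mulVec {P Q : Matrix m m 𝕜} {r c : ℝ} (hrc : r < c)
    (hQ : (Q - c • 1).PosSemidef) (hPr : (P + r • 1).PosSemidef) (hrP : (r • 1 - P).PosSemidef)
    {μ : 𝕜} {v : m → 𝕜} (hv : v ≠ 0) (hPQ : P *ᵥ v = μ • Q *ᵥ v) : ‖μ‖ < 1 := by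
  set t := RCLike.re (star v ⬝ᵥ v)
  set p := star v ⬝ᵥ P *ᵥ v
  set q := star v ⬝ᵥ Q *ᵥ v
  have ht : 0 < t := (RCLike.pos_iff.mp (dotProduct_star_self_pos_iff.mpr hv)).1
  have hpq : p = μ * q := by simp only [p, q, hPQ, dotProduct_smul, smul_eq_mul]
  have hq : c * t ≤ RCLike.re q := by
    have := hQ.re_dotProduct_nonneg v
    rw [sub_eq_add_neg, ← neg_smul, re_star_dotProduct_add_smul_one_mulVec] at this
    linarith
  have hp : |RCLike.re p| ≤ r * t := by
    have h₁ := hPr.re_dotProduct_nonneg v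
    have h₂ := hrP.re_dotProduct_nonneg v
    rw [re_star_dotProduct_add_smul_one_mulVec] at h₁
    rw [sub_eq_neg_add, re_star_dotProduct_add_smul_one_mulVec, neg_mulVec, dotProduct_neg,
      map_neg] at h₂
    exact abs_le.mpr ⟨by linarith, by linarith⟩
  have hp_norm : ‖p‖ = |RCLike.re p| := by
    have hP : P.IsHermitian := by simpa using hPr.isHermitian.sub (isHermitian_one.smul (.all r))
    rw [← RCLike.norm_ofReal (K := 𝕜), RCLike.conj_eq_iff_re.mp
      (RCLike.conj_eq_iff_im.mpr (hP.im_star_dotProduct_mulVec_self v))]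
  have : ‖μ‖ * ‖q‖ < 1 * ‖q‖ := calc
    ‖μ‖ * ‖q‖ = |RCLike.re p| := by rw [← norm_mul, ← hpq, hp_norm]
    _ ≤ r * t := hp
    _ < c * t := by gcongr
    _ ≤ 1 * ‖q‖ := by rw [one_mul]; exact hq.trans (RCLike.re_le_norm q)
  exact lt_of_mul_lt_mul_right this (norm_nonneg q)

omit [DecidableEq m] in
theorem PosSemidef.map_ofReal {X : Matrix m m ℝ} (hX : X.PosSemidef) :
    (X.map Complex.ofReal).PosSemidef := by
  classical
  obtain ⟨B, rfl⟩ := CStarAlgebra.nonneg_iff_eq_star_mul_self.mp hX.nonneg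
  have : (star B * B).map Complex.ofReal = (B.map Complex.ofReal)ᴴ * B.map Complex.ofReal := by
    ext i j
    simp [mul_apply, conjTranspose_apply]
  rw [this]
  exact posSemidef_conjTranspose_mul_self _

theorem exists_mulVec_eq_smul_of_mem_spectrum {K : Type*} [Field K] {M : Matrix m m K} {μ : K}
    (h : μ ∈ spectrum K M) : ∃ v ≠ 0, M *ᵥ v = μ • v := by
  rw [← spectrum_toLin', ← Module.End.hasEigenvalue_iff_mem_spectrum] at h
  obtain ⟨v, hv⟩ := h.exists_hasEigenvector
  exact ⟨v, hv.2, hv.apply_eq_smul⟩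

theorem one_sub_nonsing_inv_mul {R : Type*} [CommRing R] {Q S : Matrix m m R} (hQ : IsUnit Q.det) :
    1 - Q⁻¹ * S = Q⁻¹ * (Q - S) := by
  rw [mul_sub, nonsing_inv_mul _ hQ]

theorem norm_lt_one_of_mem_spectrum_nonsing_inv_mul {P Q : Matrix m m ℝ} {r c : ℝ} (hrc : r < c)
    (hc : 0 < c) (hQ : (Q - c • 1).PosSemidef) (hPr : (P + r • 1).PosSemidef)
    (hrP : (r • 1 - P).PosSemidef) {μ : ℂ}
    (hμ : μ ∈ spectrum ℂ ((Q⁻¹ * P).map Complex.ofReal)) : ‖μ‖ < 1 := by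
  set φ := (Complex.ofRealAm : ℝ →ₐ[ℝ] ℂ).mapMatrix (m := m)
  obtain ⟨v, hv, hv_eig⟩ := exists_mulVec_eq_smul_of_mem_spectrum hμ
  have hQP : Q * (Q⁻¹ * P) = P := by
    have hQ_det := (isUnit_iff_isUnit_det Q).mp (hQ.posDef_of_sub_smul_one hc).isUnit
    rw [← mul_assoc, mul_nonsing_inv _ hQ_det, one_mul]
  refine norm_lt_one_of_mulVec_eq_smul_mulVec hrc (P := φ P) (Q := φ Q) ?_ ?_ ?_ hv ?_
  · rw [← map_one φ, ← map_smul, ← map_sub]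
    exact hQ.map_ofReal
  · rw [← map_one φ, ← map_smul, ← map_add]
    exact hPr.map_ofReal
  · rw [← map_one φ, ← map_smul, ← map_sub]
    exact hrP.map_ofReal
  · rw [← hQP, map_mul, ← mulVec_mulVec]
    exact (congrArg _ hv_eig).trans (mulVec_smul _ _ _)

end Matrix

section lamMinMax

variable {n : ℕ} [NeZero n] {A : Matrix (Fin n) (Fin n) ℝ} (hA : A.IsHermitian)

theorem lamMin_le_eigenvalues (i : Fin n) : lamMin hA ≤ hA.eigenvalues i :=
  Finset.inf'_le _ (Finset.mem_univ i)

theorem eigenvalues_le_lamMax (i : Fin n) : hA.eigenvalues i ≤ lamMax hA :=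
  Finset.le_sup' _ (Finset.mem_univ i)

theorem lamMin_le_lamMax : lamMin hA ≤ lamMax hA :=
  (lamMin_le_eigenvalues hA 0).trans (eigenvalues_le_lamMax hA 0)

theorem posSemidef_sub_lamMin_smul_one : (A - lamMin hA • 1).PosSemidef :=
  (hA.posSemidef_sub_smul_one_iff _).mpr (lamMin_le_eigenvalues hA)

theorem posSemidef_lamMax_smul_one_sub : (lamMax hA • 1 - A).PosSemidef :=
  (hA.posSemidef_smul_one_sub_iff _).mpr (eigenvalues_le_lamMax hA)

end lamMinMax

/-- With `A` SPD, `N` symmetric, `λ_min(N) > -λ_min(A)` and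
`β = (λ_min(N)+λ_max(N))/2`, the spectral radius of `I - (A + βI)⁻¹(A + N)` is `< 1`,
i.e. every complex eigenvalue has absolute value `< 1`. -/
theorem spectralRadius_lt_one {n : ℕ} [NeZero n]
    (A N : Matrix (Fin n) (Fin n) ℝ)
    (hA : A.PosDef) (hN : N.IsHermitian)
    (hNA : -lamMin hA.1 < lamMin hN)
    (β : ℝ) (hβ : β = (lamMin hN + lamMax hN) / 2) :
    ∀ μ ∈ spectrum ℂ
        (((1 : Matrix (Fin n) (Fin n) ℝ) - (A + β • 1)⁻¹ * (A + N)).map Complex.ofReal),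
      ‖μ‖ < 1 := by
  intro μ hμ
  have hN_range := lamMin_le_lamMax hN
  have hc : 0 < lamMin hA.1 + β := by linarith
  have hB : (A + β • 1 - (lamMin hA.1 + β) • 1).PosSemidef := by
    convert posSemidef_sub_lamMin_smul_one hA.1 using 1
    module
  rw [one_sub_nonsing_inv_mul
    ((isUnit_iff_isUnit_det _).mp (hB.posDef_of_sub_smul_one hc).isUnit),
    show A + β • 1 - (A + N) = β • 1 - N by abel] at hμ
  refine norm_lt_one_of_mem_spectrum_nonsing_inv_mul (r := (lamMax hN - lamMin hN) / 2)
    (by linarith) hc hB ?_ ?_ hμ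
  · convert posSemidef_lamMax_smul_one_sub hN using 1
    rw [hβ]; module
  · convert posSemidef_sub_lamMin_smul_one hN using 1
    rw [hβ]; module
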